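/- If s ⪯_M t (i.e., there exists u ∈ S with s + u = t and ord(s) + ord(u) = ord(t)) and t has a unique maximal representation, then s has a unique maximal representation. -/

import Mathlib

open Finset

/-- `S` is a numerical semigroup: a submonoid of `(ℕ, +)` with finite complement. -/
def IsNumSgp (S : Set ℕ) : Prop :=
  0 ∈ S ∧ (∀ a ∈ S, ∀ b ∈ S, a + b ∈ S) ∧ (Sᶜ : Set ℕ).Finite

/-- `s` belongs to the Apéry set of `S` with respect to `m`:
`s ∈ S` and `s - m ∉ S` (i.e. no `u ∈ S` with `u + m = s`). -/
def InApery (S : Set ℕ) (m s : ℕ) : Prop :=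
  s ∈ S ∧ ∀ u ∈ S, u + m ≠ s

def AperySet (S : Set ℕ) (m : ℕ) : Set ℕ := {s | InApery S m s}

/-- `ordS S s` is the largest `h` such that `s` is a sum of `h` nonzero elements of `S`. -/
noncomputable def ordS (S : Set ℕ) (s : ℕ) : ℕ :=
  sSup {h : ℕ | ∃ f : Fin h → ℕ, (∀ j, f j ∈ S ∧ f j ≠ 0) ∧ ∑ j, f j = s}

/-- `g` generates `S`. -/
def Generates (S : Set ℕ) {ν : ℕ} (g : Fin ν → ℕ) : Prop :=
  ∀ s, s ∈ S ↔ ∃ lam : Fin ν → ℕ, ∑ i, lam i * g i = s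

/-- `g` is a minimal generating system of `S`: it generates `S`
and no `g i` is generated by the remaining generators. -/
def MinimalGen (S : Set ℕ) {ν : ℕ} (g : Fin ν → ℕ) : Prop :=
  Generates S g ∧ ∀ i, ¬ ∃ lam : Fin ν → ℕ, lam i = 0 ∧ ∑ j, lam j * g j = g i

/-- `lam` is a maximal representation of `s`: the coefficient sum equals `ordS S s`. -/
def IsMaxRep (S : Set ℕ) {ν : ℕ} (g : Fin ν → ℕ) (lam : Fin ν → ℕ) (s : ℕ) : Prop :=
  ∑ i, lam i * g i = s ∧ ∑ i, lam i = ordS S s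

/-- `s` has a unique maximal representation. -/
def UniqueMaxRep (S : Set ℕ) {ν : ℕ} (g : Fin ν → ℕ) (s : ℕ) : Prop :=
  ∃! lam : Fin ν → ℕ, IsMaxRep S g lam s

/-- `β_i = max {h | h g_i ∈ Ap(S) and ord(h g_i) = h}`. -/
noncomputable def betaN (S : Set ℕ) (m : ℕ) {ν : ℕ} (g : Fin ν → ℕ) (i : Fin ν) : ℕ :=
  sSup {h : ℕ | InApery S m (h * g i) ∧ ordS S (h * g i) = h}

/-- `γ_i = max {h | h g_i ∈ Ap(S), ord(h g_i) = h and h g_i has a unique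
maximal representation}`. -/
noncomputable def gammaN (S : Set ℕ) (m : ℕ) {ν : ℕ} (g : Fin ν → ℕ) (i : Fin ν) : ℕ :=
  sSup {h : ℕ | InApery S m (h * g i) ∧ ordS S (h * g i) = h ∧ UniqueMaxRep S g (h * g i)}

/-- `B = {Σ_{i≥2} λ_i g_i : 0 ≤ λ_i ≤ β_i}`. -/
def Bset (S : Set ℕ) (m : ℕ) {ν : ℕ} [NeZero ν] (g : Fin ν → ℕ) : Set ℕ :=
  {s | ∃ lam : Fin ν → ℕ, lam 0 = 0 ∧ (∀ i, lam i ≤ betaN S m g i) ∧ ∑ i, lam i * g i = s}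

/-- `Γ = {Σ_{i≥2} λ_i g_i : 0 ≤ λ_i ≤ γ_i}`. -/
def GammaSet (S : Set ℕ) (m : ℕ) {ν : ℕ} [NeZero ν] (g : Fin ν → ℕ) : Set ℕ :=
  {s | ∃ lam : Fin ν → ℕ, lam 0 = 0 ∧ (∀ i, lam i ≤ gammaN S m g i) ∧ ∑ i, lam i * g i = s}

/-- `s ⪯_M t`. -/
def predM (S : Set ℕ) (s t : ℕ) : Prop :=
  ∃ u ∈ S, s + u = t ∧ ordS S s + ordS S u = ordS S t

/-!
Maximal representations of `s` and of `u` add up to a representation of `t = s + u` whose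
length is `ord s + ord u = ord t`, i.e. to a maximal one. Hence if `lam`, `lam'` are maximal
representations of `s` and `mu` is one of `u`, then `lam + mu = lam' + mu` by uniqueness at `t`,
and `lam = lam'`. Existence of maximal representations comes from decomposing each of the
`ord s` summands of `s` into generators.
-/

/-- `ordS S s` is `sSup {h | IsSumOfNonzero S h s}`. -/
def IsSumOfNonzero (S : Set ℕ) (h s : ℕ) : Prop :=
  ∃ f : Fin h → ℕ, (∀ j, f j ∈ S ∧ f j ≠ 0) ∧ ∑ j, f j = s

namespace IsSumOfNonzero

variable {S : Set ℕ}

theorem zero : IsSumOfNonzero S 0 0 :=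
  ⟨Fin.elim0, fun j => j.elim0, rfl⟩

theorem add {h₁ h₂ s₁ s₂ : ℕ} (hs₁ : IsSumOfNonzero S h₁ s₁) (hs₂ : IsSumOfNonzero S h₂ s₂) :
    IsSumOfNonzero S (h₁ + h₂) (s₁ + s₂) := by
  obtain ⟨f₁, hf₁, rfl⟩ := hs₁
  obtain ⟨f₂, hf₂, rfl⟩ := hs₂
  refine ⟨Fin.append f₁ f₂, Fin.addCases (by simpa using hf₁) (by simpa using hf₂), ?_⟩
  simp [Fin.sum_univ_add]

theorem sum {ι : Type*} (I : Finset ι) {h s : ι → ℕ} (hs : ∀ i ∈ I, IsSumOfNonzero S (h i) (s i)) :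
    IsSumOfNonzero S (∑ i ∈ I, h i) (∑ i ∈ I, s i) := by
  have key := Finset.sum_induction (fun i => (h i, s i)) (fun p => IsSumOfNonzero S p.1 p.2)
    (fun _ _ => add) zero hs
  simpa only [Prod.fst_sum, Prod.snd_sum] using key

theorem le {h s : ℕ} (hs : IsSumOfNonzero S h s) : h ≤ s := by
  obtain ⟨f, hf, rfl⟩ := hs
  calc h = ∑ _j : Fin h, 1 := by simp
    _ ≤ ∑ j, f j := Finset.sum_le_sum fun j _ => Nat.one_le_iff_ne_zero.mpr (hf j).2

theorem le_ordS {h s : ℕ} (hs : IsSumOfNonzero S h s) : h ≤ ordS S s :=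
  le_csSup ⟨s, fun _ => le⟩ hs

theorem ordS {h s : ℕ} (hs : IsSumOfNonzero S h s) : IsSumOfNonzero S (ordS S s) s :=
  Nat.sSup_mem ⟨h, hs⟩ ⟨s, fun _ => le⟩

end IsSumOfNonzero

section Representations

variable {S : Set ℕ} {ν : ℕ} {g : Fin ν → ℕ}

theorem Generates.mem (hgen : Generates S g) (i : Fin ν) : g i ∈ S :=
  (hgen (g i)).mpr ⟨Pi.single i 1, by simp [Pi.single_apply]⟩

theorem MinimalGen.ne_zero (hmin : MinimalGen S g) (i : Fin ν) : g i ≠ 0 := fun hi =>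
  hmin.2 i ⟨0, rfl, by simp [hi]⟩

theorem MinimalGen.isSumOfNonzero_rep (hmin : MinimalGen S g) (lam : Fin ν → ℕ) :
    IsSumOfNonzero S (∑ i, lam i) (∑ i, lam i * g i) :=
  IsSumOfNonzero.sum _ fun i _ =>
    ⟨fun _ => g i, fun _ => ⟨hmin.1.mem i, hmin.ne_zero i⟩, by simp⟩

theorem MinimalGen.sum_le_ordS (hmin : MinimalGen S g) (lam : Fin ν → ℕ) :
    ∑ i, lam i ≤ ordS S (∑ i, lam i * g i) :=
  (hmin.isSumOfNonzero_rep lam).le_ordS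

/-- Summing representations of the `h` summands of `s` gives a representation of `s`
with at least `h` generators. -/
theorem Generates.exists_rep_of_isSumOfNonzero (hgen : Generates S g) {h s : ℕ}
    (hs : IsSumOfNonzero S h s) : ∃ lam : Fin ν → ℕ, ∑ i, lam i * g i = s ∧ h ≤ ∑ i, lam i := by
  obtain ⟨f, hf, rfl⟩ := hs
  choose lam hlam using fun j => (hgen (f j)).mp (hf j).1
  refine ⟨∑ j, lam j, ?_, ?_⟩
  · simp only [Finset.sum_apply, Finset.sum_mul]
    rw [Finset.sum_comm]
    exact Finset.sum_congr rfl fun j _ => hlam j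
  · have hpos : ∀ j, 1 ≤ ∑ i, lam j i := fun j => by
      by_contra! hzero
      have hcoeff := Finset.sum_eq_zero_iff.mp (Nat.lt_one_iff.mp hzero)
      refine (hf j).2 ?_
      rw [← hlam j]
      exact Finset.sum_eq_zero fun i hi => by rw [hcoeff i hi, zero_mul]
    calc h = ∑ _j : Fin h, 1 := by simp
      _ ≤ ∑ j, ∑ i, lam j i := Finset.sum_le_sum fun j _ => hpos j
      _ = ∑ i, (∑ j, lam j) i := by simp only [Finset.sum_apply]; exact Finset.sum_comm

theorem MinimalGen.exists_isMaxRep (hmin : MinimalGen S g) {s : ℕ} (hs : s ∈ S) :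
    ∃ lam, IsMaxRep S g lam s := by
  obtain ⟨lam₀, rfl⟩ := (hmin.1 s).mp hs
  obtain ⟨lam, hlam, hle⟩ :=
    hmin.1.exists_rep_of_isSumOfNonzero (hmin.isSumOfNonzero_rep lam₀).ordS
  refine ⟨lam, hlam, le_antisymm ?_ hle⟩
  simpa only [hlam] using hmin.sum_le_ordS lam

end Representations

theorem IsMaxRep.add {S : Set ℕ} {ν : ℕ} {g : Fin ν → ℕ} {lam mu : Fin ν → ℕ} {s u : ℕ}
    (hlam : IsMaxRep S g lam s) (hmu : IsMaxRep S g mu u)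
    (hord : ordS S s + ordS S u = ordS S (s + u)) : IsMaxRep S g (lam + mu) (s + u) := by
  refine ⟨?_, ?_⟩
  · simp only [Pi.add_apply, add_mul, Finset.sum_add_distrib, hlam.1, hmu.1]
  · simp only [Pi.add_apply, Finset.sum_add_distrib, hlam.2, hmu.2, hord]

theorem uniqueMaxRep_of_predM_general (S : Set ℕ) {ν : ℕ} (g : Fin ν → ℕ)
    (hgen : MinimalGen S g)
    (s t : ℕ) (hs : s ∈ S) (hst : predM S s t)
    (hunique : UniqueMaxRep S g t) :
    UniqueMaxRep S g s := by
  obtain ⟨u, hu, rfl, hord⟩ := hst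
  obtain ⟨lam, hlam⟩ := hgen.exists_isMaxRep hs
  obtain ⟨mu, hmu⟩ := hgen.exists_isMaxRep hu
  exact ⟨lam, hlam, fun lam' hlam' =>
    add_right_cancel (b := mu) (hunique.unique (hlam'.add hmu hord) (hlam.add hmu hord))⟩

theorem uniqueMaxRep_of_predM (S : Set ℕ) {ν : ℕ} [NeZero ν] (g : Fin ν → ℕ) (hν : 2 ≤ ν)
    (hS : IsNumSgp S) (hgen : MinimalGen S g) (hmono : StrictMono g)
    (hmpos : 0 < g 0) (hmul : ∀ s ∈ S, s ≠ 0 → g 0 ≤ s)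
    (s t : ℕ) (hs : s ∈ S) (ht : t ∈ S) (hst : predM S s t)
    (hunique : UniqueMaxRep S g t) :
    UniqueMaxRep S g s :=
  uniqueMaxRep_of_predM_general S g hgen s t hs hst hunique
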